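/- Let U ∈ G_k P_n and b ∈ ℂ. Then ord_b W(U) = kℓ − N(λ), where λ is the b-shape of U, ℓ = n + 1 − k, and N(λ) is the total of λ. In particular, b is a root of the Wronskian W(U) if and only if the b-shape of U is not the full k×ℓ rectangle. -/

import Mathlib

open Polynomial Finset

/-- The Wronskian `W(p_1, …, p_k) = det(p_i^{(j−1)})_{1≤i,j≤k}`. -/
noncomputable def wronskian' (k : ℕ) (p : Fin k → Polynomial ℂ) : Polynomial ℂ :=
  Matrix.det (Matrix.of fun i j : Fin k =>
    (fun q : Polynomial ℂ => Polynomial.derivative q)^[(j : ℕ)] (p i))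

/-!
After the Taylor shift `X ↦ X + b` we may take `b = 0`. Pick `g_i ∈ U` with `ord g_i = ν_i` and
write `g = A p`, so that `W(g) = det A · W(p)`. In the Leibniz expansion of
`W(g) = det (g_{σ i}^{(i)})` every term is divisible by `X ^ (∑ ν_i − ∑ i)`, and the coefficient of
that power is `∏ c_i · det ((ν_i)_j) = ∏ c_i · V(ν_1, …, ν_k)`, with `c_i` the lowest coefficient
of `g_i` and `(ν)_j` the falling factorial. This is nonzero, so `W(g) ≠ 0` (hence `det A ≠ 0`)
and `ord W(p) = ord W(g) = ∑ ν_i − k(k−1)/2`, which is `kℓ − N(λ)` because `ν_i ≤ n`.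
-/

section StrictMonoFin

variable {k : ℕ} {ν : Fin k → ℕ}

theorem StrictMono.fin_add_le (hν : StrictMono ν) {i j : Fin k} {d : ℕ}
    (hij : (i : ℕ) + d = j) : ν i + d ≤ ν j := by
  induction d generalizing j with
  | zero => obtain rfl : i = j := Fin.ext hij; rfl
  | succ d ih =>
    have hd : (i : ℕ) + d < k := by omega
    have hlt : ν ⟨(i : ℕ) + d, hd⟩ < ν j := hν (Fin.mk_lt_of_lt_val (by omega))
    have := ih (j := ⟨(i : ℕ) + d, hd⟩) rfl
    omega

theorem StrictMono.fin_val_le (hν : StrictMono ν) (i : Fin k) : (i : ℕ) ≤ ν i :=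
  (Nat.le_add_left _ _).trans (hν.fin_add_le (i := ⟨0, i.pos⟩) (zero_add _))

theorem StrictMono.fin_le_sub_add {n : ℕ} (hν : StrictMono ν) (hνn : ∀ i, ν i ≤ n)
    (j : Fin k) : ν j ≤ n + 1 - k + j := by
  have hgap := hν.fin_add_le (i := j) (j := ⟨k - 1, by have := j.isLt; omega⟩) (d := k - 1 - j)
    (Nat.add_sub_cancel' (by omega))
  have := hνn ⟨k - 1, by have := j.isLt; omega⟩
  have := hν.fin_val_le j
  omega

theorem Fin.sum_sub_sum_val_le_sum_perm_tsub (σ : Equiv.Perm (Fin k)) :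
    ∑ i, ν i - ∑ i : Fin k, (i : ℕ) ≤ ∑ i, (ν (σ i) - (i : ℕ)) := by
  rw [tsub_le_iff_right, ← sum_add_distrib, ← Equiv.sum_comp σ ν]
  exact sum_le_sum fun i _ => le_tsub_add

theorem Fin.sum_sub_sum_val_lt_sum_perm_tsub (hν : StrictMono ν)
    {σ : Equiv.Perm (Fin k)} {i₀ : Fin k} (hi₀ : ν (σ i₀) < i₀) :
    ∑ i, ν i - ∑ i : Fin k, (i : ℕ) < ∑ i, (ν (σ i) - (i : ℕ)) := by
  have hle : ∑ i : Fin k, (i : ℕ) ≤ ∑ i, ν i := sum_le_sum fun i _ => hν.fin_val_le i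
  have hlt : ∑ i, ν (σ i) < ∑ i, ((ν (σ i) - (i : ℕ)) + i) :=
    sum_lt_sum (fun i _ => le_tsub_add) ⟨i₀, mem_univ _, by omega⟩
  rw [Equiv.sum_comp σ ν, sum_add_distrib] at hlt
  omega

theorem Fin.sum_perm_tsub_eq_sum_sub_sum_val {σ : Equiv.Perm (Fin k)}
    (hσ : ∀ i : Fin k, (i : ℕ) ≤ ν (σ i)) :
    ∑ i, (ν (σ i) - (i : ℕ)) = ∑ i, ν i - ∑ i : Fin k, (i : ℕ) := by
  rw [← Equiv.sum_comp σ ν, eq_tsub_iff_add_eq_of_le (sum_le_sum fun i _ => hσ i),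
    ← sum_add_distrib]
  exact sum_congr rfl fun i _ => Nat.sub_add_cancel (hσ i)

theorem Fin.sum_sub_sum_val_pos_iff (hν : StrictMono ν) :
    0 < ∑ i, ν i - ∑ i : Fin k, (i : ℕ) ↔ ∃ j : Fin k, (j : ℕ) < ν j := by
  rw [tsub_pos_iff_lt]
  refine ⟨fun h => ?_, fun ⟨j, hj⟩ => sum_lt_sum (fun i _ => hν.fin_val_le i) ⟨j, mem_univ _, hj⟩⟩
  by_contra! hall
  exact h.ne (sum_congr rfl fun i _ => le_antisymm (hν.fin_val_le i) (hall i))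

theorem mul_sub_sum_shape_eq {n : ℕ} (hν : StrictMono ν) (hνn : ∀ i, ν i ≤ n) :
    k * (n + 1 - k) - ∑ j : Fin k, ((n + 1 - k) + (j : ℕ) - ν j) =
      ∑ i, ν i - ∑ i : Fin k, (i : ℕ) := by
  have hle : ∑ i : Fin k, (i : ℕ) ≤ ∑ i, ν i := sum_le_sum fun i _ => hν.fin_val_le i
  have hge : ∑ i, ν i ≤ ∑ j : Fin k, ((n + 1 - k) + (j : ℕ)) :=
    sum_le_sum fun j _ => hν.fin_le_sub_add hνn j
  rw [sum_tsub_distrib _ fun j _ => hν.fin_le_sub_add hνn j]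
  rw [sum_add_distrib, sum_const, card_univ, Fintype.card_fin, smul_eq_mul] at hge ⊢
  omega

end StrictMonoFin

theorem Polynomial.coeff_prod_of_X_pow_dvd {ι R : Type*} [CommSemiring R] (s : Finset ι)
    (f : ι → R[X]) (μ : ι → ℕ) (h : ∀ i ∈ s, X ^ μ i ∣ f i) :
    (∏ i ∈ s, f i).coeff (∑ i ∈ s, μ i) = ∏ i ∈ s, (f i).coeff (μ i) := by
  choose! g hg using h
  rw [prod_congr rfl hg, prod_mul_distrib, prod_pow_eq_pow_sum, coeff_X_pow_mul', if_pos le_rfl,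
    tsub_self, coeff_zero_prod]
  refine prod_congr rfl fun i hi => ?_
  rw [hg i hi, coeff_X_pow_mul', if_pos le_rfl, tsub_self]

theorem Polynomial.X_pow_dvd_prod_iterate_derivative {R : Type*} [CommSemiring R] {k : ℕ}
    {q : Fin k → R[X]} {ν : Fin k → ℕ} (hq : ∀ i, X ^ ν i ∣ q i) (σ : Equiv.Perm (Fin k)) :
    X ^ (∑ i, (ν (σ i) - (i : ℕ))) ∣ ∏ i : Fin k, derivative^[i] (q (σ i)) := by
  rw [← prod_pow_eq_pow_sum]
  exact prod_dvd_prod_of_dvd _ _ fun i _ => pow_sub_dvd_iterate_derivative_of_pow_dvd _ (hq (σ i))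

theorem Polynomial.derivative_taylor {R : Type*} [CommSemiring R] (r : R) (f : R[X]) :
    derivative (taylor r f) = taylor r (derivative f) := by
  rw [taylor_apply, taylor_apply, derivative_comp, derivative_X_add_C, one_mul]

theorem Polynomial.iterate_derivative_taylor {R : Type*} [CommSemiring R] (r : R) (f : R[X])
    (j : ℕ) : derivative^[j] (taylor r f) = taylor r (derivative^[j] f) :=
  Function.Commute.iterate_left (fun f => derivative_taylor r f) j f

theorem Polynomial.rootMultiplicity_le_natDegree {R : Type*} [CommRing R] (b : R) (p : R[X]) :
    rootMultiplicity b p ≤ p.natDegree := by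
  rw [rootMultiplicity_eq_natTrailingDegree, ← taylor_apply, ← natDegree_taylor p b]
  exact natTrailingDegree_le_natDegree _

theorem Polynomial.X_pow_dvd_taylor_rootMultiplicity {R : Type*} [CommRing R] (b : R) (p : R[X]) :
    X ^ rootMultiplicity b p ∣ taylor b p := by
  rw [rootMultiplicity_eq_natTrailingDegree, ← taylor_apply]
  exact X_pow_dvd_iff.mpr fun d hd => coeff_eq_zero_of_lt_natTrailingDegree hd

theorem Polynomial.coeff_taylor_rootMultiplicity_ne_zero {R : Type*} [CommRing R] {b : R}
    {p : R[X]} (hp : p ≠ 0) : (taylor b p).coeff (rootMultiplicity b p) ≠ 0 := by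
  rw [rootMultiplicity_eq_natTrailingDegree, ← taylor_apply]
  exact trailingCoeff_nonzero_iff_nonzero.mpr ((taylor_eq_zero b p).not.mpr hp)

theorem Matrix.det_descFactorial_eq_det_vandermonde {R : Type*} [CommRing R] [IsDomain R] {k : ℕ}
    (ν : Fin k → ℕ) :
    (Matrix.of fun i j : Fin k => ((ν i).descFactorial j : R)).det =
      (Matrix.vandermonde fun i => (ν i : R)).det := by
  rw [Matrix.det_eval_matrixOfPolynomials_eq_det_vandermonde _ (fun j => descPochhammer R j)
    (fun j => descPochhammer_natDegree R j) (fun j => monic_descPochhammer R j)]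
  simp only [descPochhammer_eval_eq_descFactorial]

theorem wronskian'_taylor (k : ℕ) (p : Fin k → ℂ[X]) (r : ℂ) :
    wronskian' k (fun i => taylor r (p i)) = taylor r (wronskian' k p) := by
  rw [wronskian', wronskian', ← taylorAlgHom_apply r (Matrix.det _), AlgHom.map_det]
  congr 1
  ext i j
  simp [iterate_derivative_taylor]

theorem wronskian'_sum_smul (k : ℕ) (A : Matrix (Fin k) (Fin k) ℂ) (p : Fin k → ℂ[X]) :
    wronskian' k (fun i => ∑ l, A i l • p l) = C A.det * wronskian' k p := by
  rw [wronskian', wronskian', RingHom.map_det, ← Matrix.det_mul]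
  congr 1
  ext i j
  simp [Matrix.mul_apply, iterate_derivative_sum, smul_eq_C_mul]

theorem coeff_wronskian' (k : ℕ) (q : Fin k → ℂ[X]) (m : ℕ) :
    (wronskian' k q).coeff m = ∑ σ : Equiv.Perm (Fin k),
      Equiv.Perm.sign σ • (∏ i : Fin k, derivative^[i] (q (σ i))).coeff m := by
  simp only [wronskian', Matrix.det_apply, finsetSum_coeff, coeff_smul, Matrix.of_apply]

section LowestOrderTerm

variable {k : ℕ} {q : Fin k → ℂ[X]} {ν : Fin k → ℕ}

theorem X_pow_dvd_wronskian' (hq : ∀ i, X ^ ν i ∣ q i) :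
    X ^ (∑ i, ν i - ∑ i : Fin k, (i : ℕ)) ∣ wronskian' k q := by
  rw [wronskian', Matrix.det_apply]
  refine dvd_sum fun σ _ => ?_
  rw [Units.smul_def, zsmul_eq_mul]
  exact ((pow_dvd_pow X (Fin.sum_sub_sum_val_le_sum_perm_tsub σ)).trans
    (X_pow_dvd_prod_iterate_derivative hq σ)).mul_left _

theorem coeff_wronskian'_eq_prod_mul_det_vandermonde (hν : StrictMono ν)
    (hq : ∀ i, X ^ ν i ∣ q i) :
    (wronskian' k q).coeff (∑ i, ν i - ∑ i : Fin k, (i : ℕ)) =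
      (∏ i, (q i).coeff (ν i)) * (Matrix.vandermonde fun i => (ν i : ℂ)).det := by
  rw [← Matrix.det_descFactorial_eq_det_vandermonde, ← Matrix.det_mul_column, coeff_wronskian',
    Matrix.det_apply]
  simp only [Matrix.of_apply]
  refine sum_congr rfl fun σ _ => congrArg _ ?_
  by_cases hσ : ∀ i : Fin k, (i : ℕ) ≤ ν (σ i)
  · rw [← Fin.sum_perm_tsub_eq_sum_sub_sum_val hσ, coeff_prod_of_X_pow_dvd _ _ _
      fun i _ => pow_sub_dvd_iterate_derivative_of_pow_dvd _ (hq (σ i))]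
    refine prod_congr rfl fun i _ => ?_
    rw [coeff_iterate_derivative, Nat.sub_add_cancel (hσ i), nsmul_eq_mul, mul_comm]
  · obtain ⟨i₀, hi₀⟩ := not_forall.mp hσ
    rw [X_pow_dvd_iff.mp (X_pow_dvd_prod_iterate_derivative hq σ) _
      (Fin.sum_sub_sum_val_lt_sum_perm_tsub hν (not_le.mp hi₀)), eq_comm]
    exact prod_eq_zero (mem_univ i₀)
      (by simp [Nat.descFactorial_eq_zero_iff_lt.mpr (not_le.mp hi₀)])

theorem coeff_wronskian'_ne_zero (hν : StrictMono ν) (hq : ∀ i, X ^ ν i ∣ q i)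
    (hc : ∀ i, (q i).coeff (ν i) ≠ 0) :
    (wronskian' k q).coeff (∑ i, ν i - ∑ i : Fin k, (i : ℕ)) ≠ 0 := by
  rw [coeff_wronskian'_eq_prod_mul_det_vandermonde hν hq]
  exact mul_ne_zero (prod_ne_zero_iff.mpr fun i _ => hc i)
    (Matrix.det_vandermonde_ne_zero_iff.mpr (Nat.cast_injective.comp hν.injective))

theorem rootMultiplicity_wronskian' (hν : StrictMono ν) (b : ℂ) (hq : ∀ i, q i ≠ 0)
    (hqν : ∀ i, rootMultiplicity b (q i) = ν i) :
    wronskian' k q ≠ 0 ∧ rootMultiplicity b (wronskian' k q) = ∑ i, ν i - ∑ i : Fin k, (i : ℕ) := by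
  have hdvd : ∀ i, X ^ ν i ∣ taylor b (q i) := fun i =>
    hqν i ▸ X_pow_dvd_taylor_rootMultiplicity b (q i)
  have hc : ∀ i, (taylor b (q i)).coeff (ν i) ≠ 0 := fun i =>
    hqν i ▸ coeff_taylor_rootMultiplicity_ne_zero (hq i)
  have hcoeff := coeff_wronskian'_ne_zero hν hdvd hc
  have hW := X_pow_dvd_wronskian' hdvd
  rw [wronskian'_taylor] at hcoeff hW
  have hW0 : taylor b (wronskian' k q) ≠ 0 := fun h => hcoeff (by rw [h, coeff_zero])
  refine ⟨fun h => hW0 (by rw [h, map_zero]), ?_⟩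
  rw [rootMultiplicity_eq_natTrailingDegree, ← taylor_apply]
  exact le_antisymm (natTrailingDegree_le_of_ne_zero hcoeff)
    (le_natTrailingDegree hW0 (X_pow_dvd_iff.mp hW))

end LowestOrderTerm

theorem wronskian_order_at_root_general (k n : ℕ)
    (p : Fin k → Polynomial ℂ) (hdeg : ∀ i, (p i).natDegree ≤ n)
    (b : ℂ)
    (ν : Fin k → ℕ) (hν : StrictMono ν)
    (hpiv : ∀ m : ℕ,
      (∃ q ∈ Submodule.span ℂ (Set.range p), q ≠ 0 ∧ Polynomial.rootMultiplicity b q = m)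
        ↔ m ∈ Set.range ν) :
    Polynomial.rootMultiplicity b (wronskian' k p) =
      k * (n + 1 - k) - ∑ j : Fin k, ((n + 1 - k) + (j : ℕ) - ν j) ∧
    ((wronskian' k p).eval b = 0 ↔
      ∃ j : Fin k, (n + 1 - k) + (j : ℕ) - ν j ≠ n + 1 - k) := by
  choose g hg_span hg_ne hg_ord using fun i => (hpiv (ν i)).mpr ⟨i, rfl⟩
  choose A hA using fun i => (Submodule.mem_span_range_iff_exists_fun ℂ).mp (hg_span i)
  obtain ⟨hWg_ne, hWg_ord⟩ := rootMultiplicity_wronskian' hν b hg_ne hg_ord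
  have hWg : wronskian' k g = C (Matrix.of A).det * wronskian' k p := by
    rw [← wronskian'_sum_smul]
    simp only [Matrix.of_apply, hA]
  have hWp_ord : rootMultiplicity b (wronskian' k p) = ∑ i, ν i - ∑ i : Fin k, (i : ℕ) := by
    rw [← hWg_ord, hWg, rootMultiplicity_mul (hWg ▸ hWg_ne), rootMultiplicity_C, zero_add]
  have hνn : ∀ i, ν i ≤ n := fun i => hg_ord i ▸ (rootMultiplicity_le_natDegree b (g i)).trans
    (hA i ▸ natDegree_sum_le_of_forall_le _ _ fun l _ => (natDegree_smul_le _ _).trans (hdeg l))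
  refine ⟨hWp_ord.trans (mul_sub_sum_shape_eq hν hνn).symm, ?_⟩
  rw [← IsRoot.def, ← rootMultiplicity_pos (right_ne_zero_of_mul (hWg ▸ hWg_ne)), hWp_ord,
    Fin.sum_sub_sum_val_pos_iff hν]
  refine exists_congr fun j => ?_
  have := hν.fin_le_sub_add hνn j
  have := hν.fin_val_le j
  omega

/-- let `U ∈ G_k P_n` be spanned by the basis `p_1, …, p_k`, `b ∈ ℂ`, and
let `ν_1 < ⋯ < ν_k` be the `b`-pivot sequence of `U` (the set of orders at `b` of
nonzero elements of `U`).  With the `b`-shape `λ_i = n − ν_i + i − k` (0-based: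
`λ(j) = ℓ + j − ν(j)` where `ℓ = n + 1 − k`), one has
`ord_b W(U) = kℓ − N(λ)`; in particular `b` is a root of `W(U)` iff the `b`-shape is
not the full `k × ℓ` rectangle. -/
theorem wronskian_order_at_root (k n : ℕ) (hk : k ≤ n + 1)
    (p : Fin k → Polynomial ℂ) (hdeg : ∀ i, (p i).natDegree ≤ n)
    (hind : LinearIndependent ℂ p) (b : ℂ)
    (ν : Fin k → ℕ) (hν : StrictMono ν)
    (hpiv : ∀ m : ℕ,
      (∃ q ∈ Submodule.span ℂ (Set.range p), q ≠ 0 ∧ Polynomial.rootMultiplicity b q = m)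
        ↔ m ∈ Set.range ν) :
    Polynomial.rootMultiplicity b (wronskian' k p) =
      k * (n + 1 - k) - ∑ j : Fin k, ((n + 1 - k) + (j : ℕ) - ν j) ∧
    ((wronskian' k p).eval b = 0 ↔
      ∃ j : Fin k, (n + 1 - k) + (j : ℕ) - ν j ≠ n + 1 - k) :=
  wronskian_order_at_root_general k n p hdeg b ν hν hpiv
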